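/- (Existence of optimal dual quantizers.) Let X be a real random variable with P(X ∈ [a,b]) = 1 and let Λ be uniformly distributed on [0,1] and independent of X. For every N ≥ 1 the infimum inf{ E|X − J_Γ(X,Λ)|² : Γ a grid in [a,b] of at most N points } is attained: there exists a grid Γ* ⊂ [a,b] with at most N points such that E|X − J_{Γ*}(X,Λ)|² equals this infimum. -/

import Mathlib

/-!
Conditionally on `X = ξ`, the dual quantizer moves `ξ` to one of the endpoints of the grid
segment `[x_j, x_{j+1}]` containing it, with the probabilities that keep it unbiased, so the
conditional error is `(x_{j+1} - ξ)(ξ - x_j)`. This product is nonpositive on every other segment,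
hence equals `max_j (x_{j+1} - ξ)(ξ - x_j)`, which is continuous in the grid. By dominated
convergence the error is a continuous function of the nodes on the compact set of grids in
`[a, b]`, so it attains its minimum.
-/

open MeasureTheory ProbabilityTheory

/-- Index `j*(ξ)` of the segment `[x_j, x_{j+1})` of the grid containing `ξ`
(with default value `N`, corresponding to the closed last segment). -/
noncomputable def jstar (N : ℕ) (x : ℕ → ℝ) (ξ : ℝ) : ℕ :=
  if h : ∃ j, j ≤ N ∧ x j ≤ ξ ∧ ξ < x (j + 1) then h.choose else N

/-- The dual quantization operator `J_Γ(ξ, λ)` associated with the grid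
`x 0 ≤ x 1 ≤ … ≤ x (N+1)`. -/
noncomputable def dualQ (N : ℕ) (x : ℕ → ℝ) (ξ lam : ℝ) : ℝ :=
  if x (jstar N x ξ + 1) = x (jstar N x ξ) then ξ
  else if lam < (x (jstar N x ξ + 1) - ξ) / (x (jstar N x ξ + 1) - x (jstar N x ξ)) then
    x (jstar N x ξ)
  else x (jstar N x ξ + 1)

open Set

section

variable {N : ℕ} {a b ξ : ℝ} {x y : ℕ → ℝ}

def IsGrid (N : ℕ) (a b : ℝ) (x : ℕ → ℝ) : Prop :=
  (∀ j ≤ N, x j ≤ x (j + 1)) ∧ x 0 = a ∧ x (N + 1) = b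

lemma IsGrid.monotoneOn (hx : IsGrid N a b x) : MonotoneOn x (Iic (N + 1)) :=
  monotoneOn_of_le_succ ordConnected_Iic fun j _ _ hj => hx.1 j (by simpa using hj)

lemma IsGrid.mem_Icc (hx : IsGrid N a b x) {j : ℕ} (hj : j ≤ N + 1) : x j ∈ Icc a b :=
  ⟨hx.2.1 ▸ hx.monotoneOn (Nat.zero_le _) hj (Nat.zero_le j),
    hx.2.2 ▸ hx.monotoneOn hj (mem_Iic.2 le_rfl) hj⟩

lemma IsGrid.congr (hx : IsGrid N a b x) (h : ∀ j ≤ N + 1, x j = y j) : IsGrid N a b y := by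
  refine ⟨fun j hj => ?_, ?_, ?_⟩
  · rw [← h j (by omega), ← h (j + 1) (by omega)]
    exact hx.1 j hj
  · rw [← h 0 (by omega)]
    exact hx.2.1
  · rw [← h (N + 1) le_rfl]
    exact hx.2.2

lemma isClosed_setOf_isGrid (N : ℕ) (a b : ℝ) : IsClosed {x : ℕ → ℝ | IsGrid N a b x} := by
  simp only [IsGrid, ofPred_and, ofPred_forall]
  refine .inter (isClosed_iInter fun j => isClosed_iInter fun _ => ?_) (.inter ?_ ?_)
  · exact isClosed_le (continuous_apply j) (continuous_apply (j + 1))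
  · exact isClosed_eq (continuous_apply 0) continuous_const
  · exact isClosed_eq (continuous_apply (N + 1)) continuous_const

lemma jstar_le : jstar N x ξ ≤ N := by
  unfold jstar
  split_ifs with h
  exacts [h.choose_spec.1, le_rfl]

lemma jstar_spec (h : ∃ j ≤ N, x j ≤ ξ ∧ ξ < x (j + 1)) :
    x (jstar N x ξ) ≤ ξ ∧ ξ < x (jstar N x ξ + 1) := by
  rw [jstar, dif_pos h]
  exact h.choose_spec.2

lemma jstar_of_not_exists (h : ¬ ∃ j ≤ N, x j ≤ ξ ∧ ξ < x (j + 1)) : jstar N x ξ = N := by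
  rw [jstar, dif_neg h]

lemma eq_of_mem_segment_of_mem_segment (hx : MonotoneOn x (Iic (N + 1))) {i j : ℕ}
    (hi : i ≤ N) (hj : j ≤ N) (hξi : x i ≤ ξ ∧ ξ < x (i + 1)) (hξj : x j ≤ ξ ∧ ξ < x (j + 1)) :
    i = j := by
  have key : ∀ {i j : ℕ}, j ≤ N → i < j → x (i + 1) ≤ x j := fun {i j} hj hij =>
    hx (mem_Iic.2 (by omega : i + 1 ≤ N + 1)) (mem_Iic.2 (by omega : j ≤ N + 1)) hij
  rcases lt_trichotomy i j with h | h | h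
  · linarith [key hj h]
  · exact h
  · linarith [key hi h]

lemma jstar_eq (hx : MonotoneOn x (Iic (N + 1))) {j : ℕ} (hj : j ≤ N)
    (hξ : x j ≤ ξ ∧ ξ < x (j + 1)) : jstar N x ξ = j :=
  eq_of_mem_segment_of_mem_segment hx jstar_le hj (jstar_spec ⟨j, hj, hξ⟩) hξ

lemma jstar_eq_iff (hx : MonotoneOn x (Iic (N + 1))) {j : ℕ} :
    jstar N x ξ = j ↔ (j ≤ N ∧ x j ≤ ξ ∧ ξ < x (j + 1)) ∨
      (j = N ∧ ¬ ∃ i ≤ N, x i ≤ ξ ∧ ξ < x (i + 1)) := by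
  constructor
  · rintro rfl
    by_cases h : ∃ i ≤ N, x i ≤ ξ ∧ ξ < x (i + 1)
    · exact .inl ⟨jstar_le, jstar_spec h⟩
    · exact .inr ⟨jstar_of_not_exists h, h⟩
  · rintro (⟨hj, hξ⟩ | ⟨rfl, h⟩)
    exacts [jstar_eq hx hj hξ, jstar_of_not_exists h]

lemma measurable_jstar (hx : MonotoneOn x (Iic (N + 1))) : Measurable (jstar N x) := by
  refine measurable_to_countable' fun j => ?_
  have : jstar N x ⁻¹' {j} = {ξ | (j ≤ N ∧ x j ≤ ξ ∧ ξ < x (j + 1)) ∨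
      (j = N ∧ ¬ ∃ i ≤ N, x i ≤ ξ ∧ ξ < x (i + 1))} := Set.ext fun ξ => jstar_eq_iff hx
  rw [this]
  measurability

lemma exists_segment_of_le_of_lt (h₀ : x 0 ≤ ξ) (hξ : ξ < x (N + 1)) :
    ∃ j ≤ N, x j ≤ ξ ∧ ξ < x (j + 1) := by
  by_contra! h
  have : ∀ j ≤ N + 1, x j ≤ ξ := by
    intro j
    induction j with
    | zero => exact fun _ => h₀
    | succ j ih => exact fun hj => h j (by omega) (ih (by omega))
  exact (this (N + 1) le_rfl).not_gt hξ

lemma IsGrid.mem_Icc_jstar (hx : IsGrid N a b x) (hξ : ξ ∈ Icc a b) :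
    ξ ∈ Icc (x (jstar N x ξ)) (x (jstar N x ξ + 1)) := by
  by_cases h : ∃ j ≤ N, x j ≤ ξ ∧ ξ < x (j + 1)
  · exact (jstar_spec h).imp_right le_of_lt
  · have hξb : ξ = b := hξ.2.eq_or_lt.resolve_right fun hlt =>
      h (exists_segment_of_le_of_lt (hx.2.1 ▸ hξ.1) (hx.2.2 ▸ hlt))
    rw [jstar_of_not_exists h, hx.2.2, hξb]
    exact ⟨hx.2.2 ▸ hx.1 N le_rfl, le_rfl⟩

lemma measurable_dualQ (hx : MonotoneOn x (Iic (N + 1))) :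
    Measurable fun p : ℝ × ℝ => dualQ N x p.1 p.2 := by
  have hj : Measurable fun p : ℝ × ℝ => jstar N x p.1 := (measurable_jstar hx).comp measurable_fst
  have hx₀ : Measurable fun p : ℝ × ℝ => x (jstar N x p.1) := measurable_from_nat.comp hj
  have hx₁ : Measurable fun p : ℝ × ℝ => x (jstar N x p.1 + 1) :=
    (measurable_from_nat (f := fun j => x (j + 1))).comp hj
  exact Measurable.ite (measurableSet_eq_fun hx₁ hx₀) measurable_fst <|
    .ite (measurableSet_lt measurable_snd ((hx₁.sub measurable_fst).div (hx₁.sub hx₀))) hx₀ hx₁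

lemma IsGrid.dualQ_mem_Icc (hx : IsGrid N a b x) (hξ : ξ ∈ Icc a b) (s : ℝ) :
    dualQ N x ξ s ∈ Icc a b := by
  have := jstar_le (N := N) (x := x) (ξ := ξ)
  unfold dualQ
  split_ifs
  exacts [hξ, hx.mem_Icc (by omega), hx.mem_Icc (by omega)]

instance isProbabilityMeasure_restrict_Icc_zero_one :
    IsProbabilityMeasure (volume.restrict (Icc (0 : ℝ) 1)) :=
  ⟨by simp [Real.volume_Icc]⟩

lemma integral_ite_lt {ν : Measure ℝ} [IsProbabilityMeasure ν] (t c₁ c₂ : ℝ) :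
    ∫ s, (if s < t then c₁ else c₂) ∂ν = ν.real (Iio t) * c₁ + (1 - ν.real (Iio t)) * c₂ := by
  classical
  rw [← probReal_compl_eq_one_sub measurableSet_Iio, ← smul_eq_mul, ← smul_eq_mul,
    ← setIntegral_const, ← setIntegral_const,
    ← integral_piecewise measurableSet_Iio (integrable_const _).integrableOn
      (integrable_const _).integrableOn]
  rfl

lemma measureReal_restrict_Icc_zero_one_Iio {t : ℝ} (ht₀ : 0 ≤ t) (ht₁ : t ≤ 1) :
    (volume.restrict (Icc (0 : ℝ) 1)).real (Iio t) = t := by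
  have : Iio t ∩ Icc 0 1 = Ico 0 t :=
    Set.ext fun s => ⟨fun h => ⟨h.2.1, h.1⟩, fun h => ⟨h.2, h.1, by linarith [h.2]⟩⟩
  rw [measureReal_restrict_apply measurableSet_Iio, this, Real.volume_real_Ico, sub_zero,
    max_eq_left ht₀]

lemma IsGrid.setIntegral_sq_sub_dualQ (hx : IsGrid N a b x) (hξ : ξ ∈ Icc a b) :
    ∫ s in Icc (0 : ℝ) 1, |ξ - dualQ N x ξ s| ^ 2 =
      (x (jstar N x ξ + 1) - ξ) * (ξ - x (jstar N x ξ)) := by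
  obtain ⟨h₀, h₁⟩ := hx.mem_Icc_jstar hξ
  unfold dualQ
  generalize jstar N x ξ = j at h₀ h₁ ⊢
  by_cases hdeg : x (j + 1) = x j
  · have hξj : ξ = x j := by linarith
    simp [hdeg, hξj]
  · have hd : 0 < x (j + 1) - x j := sub_pos.2 ((h₀.trans h₁).lt_of_ne (Ne.symm hdeg))
    set t := (x (j + 1) - ξ) / (x (j + 1) - x j) with ht
    have ht₀ : 0 ≤ t := div_nonneg (by linarith) hd.le
    have ht₁ : t ≤ 1 := (div_le_one hd).2 (by linarith)
    have : (fun s => |ξ - if x (j + 1) = x j then ξ else if s < t then x j else x (j + 1)| ^ 2) =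
        fun s => if s < t then (ξ - x j) ^ 2 else (ξ - x (j + 1)) ^ 2 := by
      ext s
      simp only [if_neg hdeg]
      split_ifs <;> rw [sq_abs]
    rw [this, integral_ite_lt, measureReal_restrict_Icc_zero_one_Iio ht₀ ht₁, ht]
    field_simp
    ring

/-- `E|ξ - J_Γ(ξ, Λ)|²`, written as a maximum over the segments of the grid. -/
def condError (N : ℕ) (x : ℕ → ℝ) (ξ : ℝ) : ℝ :=
  (Finset.range (N + 1)).sup' Finset.nonempty_range_add_one fun j => (x (j + 1) - ξ) * (ξ - x j)

lemma condError_eq (hx : MonotoneOn x (Iic (N + 1))) {j : ℕ} (hj : j ≤ N) (h₀ : x j ≤ ξ)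
    (h₁ : ξ ≤ x (j + 1)) : condError N x ξ = (x (j + 1) - ξ) * (ξ - x j) := by
  refine le_antisymm (Finset.sup'_le _ _ fun i hi => ?_)
    (Finset.le_sup' (fun i => (x (i + 1) - ξ) * (ξ - x i)) (Finset.mem_range.2 (by omega)))
  have hiN : i < N + 1 := Finset.mem_range.1 hi
  have hmono : ∀ {k l : ℕ}, k ≤ l → l ≤ N + 1 → x k ≤ x l := fun {k l} hkl hl =>
    hx (mem_Iic.2 (by omega : k ≤ N + 1)) (mem_Iic.2 hl) hkl
  have hxi : x i ≤ x (i + 1) := hmono (Nat.le_succ i) (by omega)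
  have hpos : 0 ≤ (x (j + 1) - ξ) * (ξ - x j) := mul_nonneg (by linarith) (by linarith)
  rcases lt_trichotomy i j with h | rfl | h
  · have : x (i + 1) ≤ x j := hmono h (by omega)
    exact (mul_nonpos_of_nonpos_of_nonneg (by linarith) (by linarith)).trans hpos
  · exact le_rfl
  · have : x (j + 1) ≤ x i := hmono h (by omega)
    exact (mul_nonpos_of_nonneg_of_nonpos (by linarith) (by linarith)).trans hpos

lemma IsGrid.condError_eq (hx : IsGrid N a b x) (hξ : ξ ∈ Icc a b) :
    condError N x ξ = (x (jstar N x ξ + 1) - ξ) * (ξ - x (jstar N x ξ)) :=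
  _root_.condError_eq hx.monotoneOn jstar_le (hx.mem_Icc_jstar hξ).1 (hx.mem_Icc_jstar hξ).2

lemma IsGrid.abs_condError_le (hx : IsGrid N a b x) (hξ : ξ ∈ Icc a b) :
    |condError N x ξ| ≤ (b - a) ^ 2 := by
  obtain ⟨h₀, h₁⟩ := hx.mem_Icc_jstar hξ
  have hj := jstar_le (N := N) (x := x) (ξ := ξ)
  have ha := hx.mem_Icc (j := jstar N x ξ) (by omega)
  have hb := hx.mem_Icc (j := jstar N x ξ + 1) (by omega)
  rw [hx.condError_eq hξ, abs_of_nonneg (mul_nonneg (by linarith) (by linarith)), sq]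
  exact mul_le_mul (by linarith [hb.2, hξ.1]) (by linarith [ha.1, hξ.2]) (by linarith)
    (by linarith [hξ.1, hξ.2])

lemma continuous_condError : Continuous (condError N x) :=
  Continuous.finset_sup'_apply _ fun _ _ => by fun_prop

lemma continuous_condError_grid (N : ℕ) (ξ : ℝ) :
    Continuous fun x : ℕ → ℝ => condError N x ξ :=
  Continuous.finset_sup'_apply _ fun _ _ => by fun_prop

lemma condError_congr (h : ∀ j ≤ N + 1, x j = y j) : condError N x = condError N y := by
  ext ξ
  refine Finset.sup'_congr _ rfl fun j hj => ?_
  have := Finset.mem_range.1 hj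
  rw [h j (by omega), h (j + 1) (by omega)]

lemma IsGrid.integral_sq_sub_dualQ {Ω : Type*} [MeasurableSpace Ω] {P : Measure Ω}
    [IsProbabilityMeasure P] {X Λ : Ω → ℝ} (hx : IsGrid N a b x) (hX : Measurable X)
    (hXab : ∀ᵐ ω ∂P, X ω ∈ Icc a b) (hΛ_meas : Measurable Λ)
    (hΛ : P.map Λ = volume.restrict (Icc (0 : ℝ) 1)) (hindep : IndepFun X Λ P) :
    ∫ ω, |X ω - dualQ N x (X ω) (Λ ω)| ^ 2 ∂P = ∫ ξ, condError N x ξ ∂(P.map X) := by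
  set μ := P.map X
  set ν := volume.restrict (Icc (0 : ℝ) 1)
  have : IsProbabilityMeasure μ := Measure.isProbabilityMeasure_map hX.aemeasurable
  have hjoint : P.map (fun ω => (X ω, Λ ω)) = μ.prod ν := hΛ ▸
    (indepFun_iff_map_prod_eq_prod_map_map hX.aemeasurable hΛ_meas.aemeasurable).1 hindep
  have hμ : ∀ᵐ ξ ∂μ, ξ ∈ Icc a b := (ae_map_iff hX.aemeasurable measurableSet_Icc).2 hXab
  set f : ℝ × ℝ → ℝ := fun p => |p.1 - dualQ N x p.1 p.2| ^ 2
  have hf : Measurable f :=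
    ((measurable_fst.sub (measurable_dualQ hx.monotoneOn)).abs).pow_const 2
  have hf_int : Integrable f (μ.prod ν) := by
    refine .of_bound hf.aestronglyMeasurable ((b - a) ^ 2) ?_
    filter_upwards [Measure.quasiMeasurePreserving_fst.ae hμ] with p hp
    rw [norm_pow, Real.norm_eq_abs, abs_abs]
    exact pow_le_pow_left₀ (abs_nonneg _)
      (Real.dist_le_of_mem_Icc hp (hx.dualQ_mem_Icc hp p.2)) 2
  calc ∫ ω, f (X ω, Λ ω) ∂P
      = ∫ p, f p ∂(μ.prod ν) := by
        rw [← hjoint, integral_map (hX.prodMk hΛ_meas).aemeasurable hf.aestronglyMeasurable]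
    _ = ∫ ξ, ∫ s, f (ξ, s) ∂ν ∂μ := integral_prod f hf_int
    _ = ∫ ξ, condError N x ξ ∂μ := integral_congr_ae <| hμ.mono fun ξ hξ =>
        (hx.setIntegral_sq_sub_dualQ hξ).trans (hx.condError_eq hξ).symm

lemma continuousOn_integral_condError {μ : Measure ℝ} [IsFiniteMeasure μ]
    (hμ : ∀ᵐ ξ ∂μ, ξ ∈ Icc a b) :
    ContinuousOn (fun x => ∫ ξ, condError N x ξ ∂μ) {x | IsGrid N a b x} :=
  continuousOn_of_dominated (fun _ _ => continuous_condError.aestronglyMeasurable)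
    (fun _ hx => hμ.mono fun _ hξ => (Real.norm_eq_abs _).trans_le (hx.abs_condError_le hξ))
    (integrable_const _) (ae_of_all _ fun ξ => (continuous_condError_grid N ξ).continuousOn)

lemma exists_isMinOn_isGrid {F : (ℕ → ℝ) → ℝ} (hab : a ≤ b)
    (hF : ContinuousOn F {x | IsGrid N a b x})
    (hF_congr : ∀ x y, (∀ j ≤ N + 1, x j = y j) → F x = F y) :
    ∃ xs ∈ {x | IsGrid N a b x}, IsMinOn F {x | IsGrid N a b x} xs := by
  -- Grids are unconstrained beyond `N + 1`; cutting them off there puts them in a compact set.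
  set K := {x | IsGrid N a b x} ∩ univ.pi fun _ => Icc a b
  have hK : IsCompact K :=
    (isCompact_univ_pi fun _ => isCompact_Icc).inter_left (isClosed_setOf_isGrid N a b)
  have htrunc : ∀ x, IsGrid N a b x → ∃ y ∈ K, F y = F x := by
    intro x hx
    have hxy : ∀ j ≤ N + 1, x j = if j ≤ N + 1 then x j else a := fun j hj => (if_pos hj).symm
    refine ⟨_, ⟨hx.congr hxy, fun j _ => ?_⟩, (hF_congr _ _ hxy).symm⟩
    dsimp only
    split_ifs with hj
    exacts [hx.mem_Icc hj, left_mem_Icc.2 hab]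
  have hgrid : IsGrid N a b fun j => if j ≤ N then a else b := by
    refine ⟨fun j hj => ?_, by simp, by simp⟩
    simp only [if_pos hj]
    split_ifs <;> linarith
  obtain ⟨y, hyK, -⟩ := htrunc _ hgrid
  obtain ⟨xs, hxs, hmin⟩ := hK.exists_isMinOn ⟨y, hyK⟩ (hF.mono inter_subset_left)
  refine ⟨xs, hxs.1, fun x hx => ?_⟩
  obtain ⟨y, hy, hFy⟩ := htrunc x hx
  exact (isMinOn_iff.1 hmin y hy).trans_eq hFy

end

theorem dualQ_optimal_grid_exists_general {Ω : Type*} [MeasurableSpace Ω] (P : Measure Ω)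
    [IsProbabilityMeasure P]
    (a b : ℝ) (hab : a < b) (N : ℕ)
    (X : Ω → ℝ) (hXmeas : Measurable X) (hXab : ∀ᵐ ω ∂P, X ω ∈ Set.Icc a b)
    (Λ : Ω → ℝ) (hΛmeas : Measurable Λ)
    (hΛ : Measure.map Λ P = volume.restrict (Set.Icc (0 : ℝ) 1))
    (hindep : IndepFun X Λ P) :
    ∃ xs : ℕ → ℝ,
      ((∀ j ≤ N, xs j ≤ xs (j + 1)) ∧ xs 0 = a ∧ xs (N + 1) = b) ∧
      ∀ x : ℕ → ℝ, ((∀ j ≤ N, x j ≤ x (j + 1)) ∧ x 0 = a ∧ x (N + 1) = b) →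
        (∫ ω, |X ω - dualQ N xs (X ω) (Λ ω)| ^ 2 ∂P) ≤
          ∫ ω, |X ω - dualQ N x (X ω) (Λ ω)| ^ 2 ∂P := by
  have : IsProbabilityMeasure (P.map X) := Measure.isProbabilityMeasure_map hXmeas.aemeasurable
  have hμ : ∀ᵐ ξ ∂P.map X, ξ ∈ Icc a b := (ae_map_iff hXmeas.aemeasurable measurableSet_Icc).2 hXab
  obtain ⟨xs, hxs, hmin⟩ := exists_isMinOn_isGrid hab.le
    (continuousOn_integral_condError (N := N) hμ) fun x y h => by rw [condError_congr h]
  refine ⟨xs, hxs, fun x hx => ?_⟩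
  rw [IsGrid.integral_sq_sub_dualQ hxs hXmeas hXab hΛmeas hΛ hindep,
    IsGrid.integral_sq_sub_dualQ hx hXmeas hXab hΛmeas hΛ hindep]
  exact hmin hx

/-- **Existence of optimal dual quantizers.** Let `X` be a real random variable
with `P(X ∈ [a,b]) = 1` and let `Λ` be uniformly distributed on `[0,1]` and independent of `X`.
For every `N ≥ 1` the infimum
`inf { E|X − J_Γ(X,Λ)|² : Γ a grid in [a,b] of at most N points }` is attained: there exists a
grid `Γ*` in `[a,b]` with at most `N` points realizing this infimum. -/
theorem dualQ_optimal_grid_exists {Ω : Type*} [MeasurableSpace Ω] (P : Measure Ω)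
    [IsProbabilityMeasure P]
    (a b : ℝ) (hab : a < b) (N : ℕ) (hN : 1 ≤ N)
    (X : Ω → ℝ) (hXmeas : Measurable X) (hXab : ∀ᵐ ω ∂P, X ω ∈ Set.Icc a b)
    (Λ : Ω → ℝ) (hΛmeas : Measurable Λ)
    (hΛ : Measure.map Λ P = volume.restrict (Set.Icc (0 : ℝ) 1))
    (hindep : IndepFun X Λ P) :
    ∃ xs : ℕ → ℝ,
      ((∀ j ≤ N, xs j ≤ xs (j + 1)) ∧ xs 0 = a ∧ xs (N + 1) = b) ∧
      ∀ x : ℕ → ℝ, ((∀ j ≤ N, x j ≤ x (j + 1)) ∧ x 0 = a ∧ x (N + 1) = b) →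
        (∫ ω, |X ω - dualQ N xs (X ω) (Λ ω)| ^ 2 ∂P) ≤
          ∫ ω, |X ω - dualQ N x (X ω) (Λ ω)| ^ 2 ∂P :=
  dualQ_optimal_grid_exists_general P a b hab N X hXmeas hXab Λ hΛmeas hΛ hindep
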